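/- arXiv:2102.07014 — 3 statements merged into one kernel-verified Lean document; each statement's English description precedes it below -/
import Mathlib

section
/- (Theorem 2, Re-Trigger on Failure.) Let all MCU signals be infinite traces as described, let modMem be the successful-modification predicate, and assume the machine-model axiom LTL(5). If the traces additionally satisfy the GAROTA sub-properties LTL(6) (Trusted PMEM Updates), LTL(9), LTL(10) (TCB entry/exit protection), and LTL(11) (TCB atomicity protection), then the Re-Trigger-on-Failure property holds: for every time t with PC(t) ∈ TCB, the weak-until formula φ W ψ holds at t, where φ(s) := ¬irq(s) ∧ ¬DMA_en(s) ∧ PC(s) ∈ TCB and ψ(s) := (PC(s) = TCB_max) ∨ (∃ u ≥ s, PC(u) = TCB_min). -/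
/-- A successful memory modification of region `X` at time `t`:
writes only take effect if no reset occurs in that cycle (H4/LTL(1)). -/
def modMem (reset W_en DMA_en : ℕ → Prop) (D_addr DMA_addr : ℕ → ℕ)
    (X : Set ℕ) (t : ℕ) : Prop :=
  ¬ reset t ∧ ((W_en t ∧ D_addr t ∈ X) ∨ (DMA_en t ∧ DMA_addr t ∈ X))

/-- Weak until: `φ W ψ` holds at time `t`. -/
def WeakUntil (φ ψ : ℕ → Prop) (t : ℕ) : Prop :=
  (∃ t', t ≤ t' ∧ ψ t' ∧ ∀ s, t ≤ s → s < t' → φ s) ∨ (∀ s, t ≤ s → φ s)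

/-- (Theorem 2, Re-Trigger on Failure.) -/
theorem re_trigger_on_failure
    (PMEM TCB : Set ℕ) (TCB_min TCB_max : ℕ)
    (hTCBmin : TCB_min ∈ TCB) (hTCBmax : TCB_max ∈ TCB)
    (PC D_addr DMA_addr : ℕ → ℕ)
    (W_en DMA_en irq reset : ℕ → Prop)
    (LTL5 : (∀ t, ¬ modMem reset W_en DMA_en D_addr DMA_addr PMEM t ∨ PC t ∈ TCB) →
            ∀ t, reset t → ∃ t', t ≤ t' ∧ PC t' = TCB_min)
    (LTL6 : ∀ t, (PC t ∉ TCB ∧ W_en t ∧ D_addr t ∈ PMEM) ∨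
                 (DMA_en t ∧ DMA_addr t ∈ PMEM) → reset t)
    (LTL9 : ∀ t, ¬ reset t ∧ PC t ∈ TCB ∧ PC (t + 1) ∉ TCB →
                 PC t = TCB_max ∨ reset (t + 1))
    (LTL10 : ∀ t, ¬ reset t ∧ PC t ∉ TCB ∧ PC (t + 1) ∈ TCB →
                  PC (t + 1) = TCB_min ∨ reset (t + 1))
    (LTL11 : ∀ t, PC t ∈ TCB ∧ (irq t ∨ DMA_en t) → reset t) :
    ∀ t, PC t ∈ TCB →
      WeakUntil (fun s => ¬ irq s ∧ ¬ DMA_en s ∧ PC s ∈ TCB)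
                (fun s => PC s = TCB_max ∨ ∃ u, s ≤ u ∧ PC u = TCB_min) t := by
  classical
  intro t ht
  -- retrigger: any reset leads to future PC = TCB_min
  have hretrig : ∀ s, reset s → ∃ u, s ≤ u ∧ PC u = TCB_min := by
    apply LTL5
    intro s
    by_cases hpc : PC s ∈ TCB
    · exact Or.inr hpc
    · left
      rintro ⟨hnr, hmod⟩
      apply hnr
      apply LTL6 s
      rcases hmod with ⟨hw, ha⟩ | h
      · exact Or.inl ⟨hpc, hw, ha⟩
      · exact Or.inr h
  set φ : ℕ → Prop := fun s => ¬ irq s ∧ ¬ DMA_en s ∧ PC s ∈ TCB with hφ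
  by_cases hall : ∀ s, t ≤ s → φ s
  · exact Or.inr hall
  · push_neg at hall
    obtain ⟨s0, hs0t, hs0⟩ := hall
    have hex : ∃ s, t ≤ s ∧ ¬ φ s := ⟨s0, hs0t, hs0⟩
    left
    obtain ⟨s, hst, hsφ, hmin⟩ : ∃ s, t ≤ s ∧ ¬ φ s ∧ ∀ m, m < s → ¬ (t ≤ m ∧ ¬ φ m) :=
      ⟨Nat.find hex, (Nat.find_spec hex).1, (Nat.find_spec hex).2,
        fun m hm => Nat.find_min hex hm⟩
    have hbefore : ∀ u, t ≤ u → u < s → φ u := by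
      intro u hu hus
      by_contra hc
      exact hmin u hus ⟨hu, hc⟩
    rcases eq_or_lt_of_le hst with heq | hlt
    · -- s = t, so PC t ∈ TCB and irq or DMA at t
      have : irq t ∨ DMA_en t := by
        rw [heq]
        by_contra hc
        push_neg at hc
        exact hsφ ⟨hc.1, hc.2, heq ▸ ht⟩
      have hr := LTL11 t ⟨ht, this⟩
      obtain ⟨u, hu, hmu⟩ := hretrig t hr
      exact ⟨t, le_refl t, Or.inr ⟨u, hu, hmu⟩, fun v hv hv' => absurd hv' (not_lt.mpr hv)⟩
    · -- s > t ; φ (s-1) holds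
      obtain ⟨p, rfl⟩ : ∃ p, s = p + 1 := ⟨s - 1, (Nat.succ_pred_eq_of_pos (Nat.zero_lt_of_lt hlt)).symm⟩
      have htp : t ≤ p := Nat.lt_succ_iff.mp hlt
      have hφp : φ p := hbefore p htp (Nat.lt_succ_self p)
      obtain ⟨hip, hdp, hpcp⟩ := hφp
      by_cases hrp : reset p
      · obtain ⟨u, hu, hmu⟩ := hretrig p hrp
        exact ⟨p, htp, Or.inr ⟨u, hu, hmu⟩,
          fun v hv hv' => hbefore v hv (Nat.lt_succ_of_lt hv')⟩
      · by_cases hpcs : PC (p + 1) ∈ TCB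
        · -- then irq or DMA at s
          have : irq (p+1) ∨ DMA_en (p+1) := by
            by_contra hc
            push_neg at hc
            exact hsφ ⟨hc.1, hc.2, hpcs⟩
          have hr := LTL11 (p+1) ⟨hpcs, this⟩
          obtain ⟨u, hu, hmu⟩ := hretrig (p+1) hr
          exact ⟨p + 1, hst, Or.inr ⟨u, hu, hmu⟩, hbefore⟩
        · rcases LTL9 p ⟨hrp, hpcp, hpcs⟩ with hmax | hrs
          · exact ⟨p, htp, Or.inl hmax,
              fun v hv hv' => hbefore v hv (Nat.lt_succ_of_lt hv')⟩
          · obtain ⟨u, hu, hmu⟩ := hretrig (p+1) hrs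
            exact ⟨p + 1, hst, Or.inr ⟨u, hu, hmu⟩, hbefore⟩
end

section
/- (Lemma: trigger-configuration modifications only from the TCB.) Let all MCU signals be infinite traces as described, let modMem be the successful-modification predicate, and let mod_tc : ℕ → Prop satisfy the machine-model axiom LTL(2). If the traces satisfy the GAROTA sub-properties LTL(6) and LTL(7), then illegal trigger misconfiguration is never successful: for every time t, mod_tc(t) implies PC(t) ∈ TCB. -/
/-- (Lemma: trigger-configuration modifications only from the TCB.) -/
theorem trigger_cfg_mod_only_from_TCB
    (PMEM IRQ_cfg TCB : Set ℕ)
    (PC D_addr DMA_addr : ℕ → ℕ)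
    (W_en DMA_en reset : ℕ → Prop)
    (mod_tc : ℕ → Prop)
    (LTL2 : ∀ t, mod_tc t →
      (modMem reset W_en DMA_en D_addr DMA_addr PMEM t ∨
       modMem reset W_en DMA_en D_addr DMA_addr IRQ_cfg t) ∧ ¬ reset t)
    (LTL6 : ∀ t, (PC t ∉ TCB ∧ W_en t ∧ D_addr t ∈ PMEM) ∨
                 (DMA_en t ∧ DMA_addr t ∈ PMEM) → reset t)
    (LTL7 : ∀ t, (PC t ∉ TCB ∧ W_en t ∧ D_addr t ∈ IRQ_cfg) ∨
                 (DMA_en t ∧ DMA_addr t ∈ IRQ_cfg) → reset t) :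
    ∀ t, mod_tc t → PC t ∈ TCB := by
  intro t hm
  obtain ⟨hmod, hnr⟩ := LTL2 t hm
  by_contra hpc
  cases hmod with
  | inl h => exact hnr (LTL6 t (h.2.elim (fun hw => .inl ⟨hpc, hw⟩) .inr))
  | inr h => exact hnr (LTL7 t (h.2.elim (fun hw => .inl ⟨hpc, hw⟩) .inr))
end

section
/- (Lemma: Re-Trigger on Failure from the reset-re-trigger property.) Let all MCU signals be infinite traces as described. Assume (R): for every time t, reset(t) implies there exists t' ≥ t with PC(t') = TCB_min; and assume the GAROTA sub-properties LTL(9), LTL(10), and LTL(11). Then for every time t with PC(t) ∈ TCB, the weak-until formula φ W ψ holds at t, where φ(s) := ¬irq(s) ∧ ¬DMA_en(s) ∧ PC(s) ∈ TCB and ψ(s) := (PC(s) = TCB_max) ∨ (∃ u ≥ s, PC(u) = TCB_min). -/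
/-- (Lemma: Re-Trigger on Failure from the reset-re-trigger property.) -/
theorem re_trigger_from_reset_retrigger
    (TCB : Set ℕ) (TCB_min TCB_max : ℕ)
    (hTCBmin : TCB_min ∈ TCB) (hTCBmax : TCB_max ∈ TCB)
    (PC : ℕ → ℕ)
    (DMA_en irq reset : ℕ → Prop)
    (R : ∀ t, reset t → ∃ t', t ≤ t' ∧ PC t' = TCB_min)
    (LTL9 : ∀ t, ¬ reset t ∧ PC t ∈ TCB ∧ PC (t + 1) ∉ TCB →
                 PC t = TCB_max ∨ reset (t + 1))
    (LTL10 : ∀ t, ¬ reset t ∧ PC t ∉ TCB ∧ PC (t + 1) ∈ TCB →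
                  PC (t + 1) = TCB_min ∨ reset (t + 1))
    (LTL11 : ∀ t, PC t ∈ TCB ∧ (irq t ∨ DMA_en t) → reset t) :
    ∀ t, PC t ∈ TCB →
      WeakUntil (fun s => ¬ irq s ∧ ¬ DMA_en s ∧ PC s ∈ TCB)
                (fun s => PC s = TCB_max ∨ ∃ u, s ≤ u ∧ PC u = TCB_min) t := by
  classical
  intro t ht
  set φ : ℕ → Prop := fun s => ¬ irq s ∧ ¬ DMA_en s ∧ PC s ∈ TCB with hφdef
  by_cases hall : ∀ s, t ≤ s → φ s
  · exact Or.inr hall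
  · left
    have hex : ∃ n, t ≤ n ∧ ¬ φ n := by
      push_neg at hall; exact hall
    obtain ⟨n, ⟨hn_le, hn_fail⟩, hmin⟩ :
        ∃ n, (t ≤ n ∧ ¬ φ n) ∧ ∀ m, m < n → ¬(t ≤ m ∧ ¬ φ m) :=
      ⟨Nat.find hex, Nat.find_spec hex, fun m hm => Nat.find_min hex hm⟩
    have hgood : ∀ m, t ≤ m → m < n → φ m := by
      intro m hm hmn
      by_contra hbad
      exact hmin m hmn ⟨hm, hbad⟩
    by_cases hin : PC n ∈ TCB
    · have hid : irq n ∨ DMA_en n := by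
        by_cases h1 : irq n
        · exact Or.inl h1
        · by_cases h2 : DMA_en n
          · exact Or.inr h2
          · exact absurd ⟨h1, h2, hin⟩ hn_fail
      obtain ⟨u, hu, hmin⟩ := R n (LTL11 n ⟨hin, hid⟩)
      exact ⟨n, hn_le, Or.inr ⟨u, hu, hmin⟩, hgood⟩
    · have hne : n ≠ t := fun h => hin (h ▸ ht)
      obtain ⟨p, rfl⟩ : ∃ p, n = p + 1 :=
        Nat.exists_eq_succ_of_ne_zero (by omega)
      have hpt : t ≤ p := by omega
      have hφp : φ p := hgood p hpt (by omega)
      by_cases hr : reset p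
      · obtain ⟨u, hu, hmin⟩ := R p hr
        exact ⟨p, hpt, Or.inr ⟨u, hu, hmin⟩,
          fun m hm hmp => hgood m hm (by omega)⟩
      · rcases LTL9 p ⟨hr, hφp.2.2, hin⟩ with hmax | hr1
        · exact ⟨p, hpt, Or.inl hmax,
            fun m hm hmp => hgood m hm (by omega)⟩
        · obtain ⟨u, hu, hmin⟩ := R (p + 1) hr1
          exact ⟨p + 1, hn_le, Or.inr ⟨u, hu, hmin⟩, hgood⟩
end
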